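/- Let 𝒞 be a set of m node-disjoint chains whose vertex sets partition a set V with |V| = n and with set of sources V_C, let T be a time function for 𝒞, and let G be a (𝒞,T)-constructed graph with edge set E(G). Let E_perf be the edge set of the perfect (𝒞,T)-constructed graph 𝒢_perf^{𝒞,T}. Then: (i) for every subset E′ ⊆ E_perf \ E(G), the set V_C is a zero forcing set of G + E′; (ii) every additive edge-set E* ⊆ (V × V) \ E(G) of G with respect to V_C satisfies |E*| ≤ n(n+1)/2 + m(2n − m − 1)/2 − |E(G)|; in particular E_perf \ E(G) is an additive edge-set of maximum cardinality, and the critical additive number of G equals n(n+1)/2 + m(2n − m − 1)/2 − |E(G)|. -/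
import Mathlib


/-- The black vertex `u` forces the white vertex `v` (color-change rule), with respect to
edge set `E` and current black set `B`: `v` is the only white out-neighbor of `u` other
than `u` itself. -/
def Forces {V : Type*} [DecidableEq V] (E : Finset (V × V)) (B : Finset V) (u v : V) : Prop :=
  u ∈ B ∧ v ∉ B ∧ u ≠ v ∧ (u, v) ∈ E ∧ ∀ w, (u, w) ∈ E → w ≠ u → w ∉ B → w = v

/-- Reachability between black sets by repeatedly applying the color-change rule. -/
inductive ZFReach {V : Type*} [DecidableEq V] (E : Finset (V × V)) : Finset V → Finset V → Prop
  | refl (B : Finset V) : ZFReach E B B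
  | step {B C : Finset V} {u v : V} (h : Forces E B u v)
      (hr : ZFReach E (insert v B) C) : ZFReach E B C

/-- `Z` is a zero forcing set of the digraph on `V` with edge set `E`:
starting from the black set `Z`, repeated application of the color-change rule
turns all vertices black. -/
def IsZFS {V : Type*} [Fintype V] [DecidableEq V] (E : Finset (V × V)) (Z : Finset V) : Prop :=
  ZFReach E Z Finset.univ

/-- A set of node-disjoint chains whose vertex sets partition `V`, encoded by the
(injective, acyclic) partial successor map along the chains. -/
structure ChainSystem (V : Type*) where
  next : V → Option V
  inj : ∀ u v w, next u = some w → next v = some w → u = v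
  acyclic : ∀ v, ¬ Relation.TransGen (fun a b => next a = some b) v v

namespace ChainSystem

variable {V : Type*} [Fintype V] [DecidableEq V] (S : ChainSystem V)

/-- `v` is the source of one of the chains (no in-neighbor in the chains). -/
def IsSource (v : V) : Prop := ∀ u, S.next u ≠ some v

/-- The set of sources of the chains. -/
def sources : Finset V := Finset.univ.filter fun v => ∀ u, S.next u ≠ some v

/-- The number `m` of chains (= number of sources). -/
def m : ℕ := S.sources.card

/-- `γ = n − m + 1`. -/
def γ : ℕ := Fintype.card V - S.m + 1

/-- The set of chain edges `⋃ᵢ E(Cᵢ)`. -/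
def chainEdges : Finset (V × V) := Finset.univ.filter fun p => S.next p.1 = some p.2

/-- `T` is a time function for the set of chains: it takes values in `[1, γ]`, equals `1` on
sources, is injective on non-sources, and increases along chains. -/
def IsTimeFunction (T : V → ℕ) : Prop :=
  (∀ v, 1 ≤ T v ∧ T v ≤ S.γ) ∧
  (∀ v, S.IsSource v → T v = 1) ∧
  (∀ u v, ¬ S.IsSource u → ¬ S.IsSource v → u ≠ v → T u ≠ T v) ∧
  (∀ u v, S.next u = some v → T u < T v)

/-- `T_max(v) = γ` if `v` is a sink, and `T(v+1) − 1` otherwise. -/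
def Tmax (T : V → ℕ) (v : V) : ℕ := (S.next v).elim S.γ fun w => T w - 1

/-- The digraph with edge set `E` is a `(𝒞,T)`-constructed graph: it contains all chain
edges, and every non-chain edge `(u,v)` satisfies `T_max(u) ≥ T(v)`. -/
def IsConstructed (T : V → ℕ) (E : Finset (V × V)) : Prop :=
  S.chainEdges ⊆ E ∧ ∀ p ∈ E, p ∉ S.chainEdges → T p.2 ≤ S.Tmax T p.1

/-- The edge set of the perfect `(𝒞,T)`-constructed graph: all chain edges together with
all pairs `(u,v)` with `T_max(u) ≥ T(v)`. -/
def perfEdges (T : V → ℕ) : Finset (V × V) :=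
  S.chainEdges ∪ Finset.univ.filter fun p => T p.2 ≤ S.Tmax T p.1

end ChainSystem

open Finset

section Aux
variable {V : Type*} [Fintype V] [DecidableEq V]

/-- transitivity of ZFReach -/
lemma zfreach_trans {E : Finset (V×V)} {A B C : Finset V}
    (h1 : ZFReach E A B) (h2 : ZFReach E B C) : ZFReach E A C := by
  induction h1 with
  | refl => exact h2
  | step h _ ih => exact ZFReach.step h (ih h2)

lemma card_eq_sum_out (F : Finset (V×V)) :
    F.card = ∑ x : V, (Finset.univ.filter fun w => (x,w) ∈ F).card := by
  rw [Finset.card_eq_sum_card_fiberwise (f := Prod.fst) (t := Finset.univ)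
    (fun p _ => Finset.mem_univ p.1)]
  refine Finset.sum_congr rfl fun x _ => ?_
  apply Finset.card_nbij' (fun p => p.2) (fun w => (x,w)) <;> intro a ha <;>
    simp_all [Finset.mem_filter] <;> aesop

namespace ChainSystem
variable (S : ChainSystem V) {T : V → ℕ}

lemma not_isSource_iff {v : V} : ¬ S.IsSource v ↔ ∃ u, S.next u = some v := by
  simp [ChainSystem.IsSource]

lemma mem_sources {v : V} : v ∈ S.sources ↔ S.IsSource v := by
  simp [ChainSystem.sources, ChainSystem.IsSource]

variable (hT : S.IsTimeFunction T)
include hT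

lemma two_le_T {v : V} (hv : ¬ S.IsSource v) : 2 ≤ T v := by
  obtain ⟨u, hu⟩ := S.not_isSource_iff.mp hv
  have h1 := (hT.1 u).1
  have h2 := hT.2.2.2 u v hu
  omega

lemma sources_eq_filter_T : S.sources = Finset.univ.filter fun v => T v ≤ 1 := by
  ext v
  simp only [ChainSystem.mem_sources, Finset.mem_filter, Finset.mem_univ, true_and]
  constructor
  · intro h; exact le_of_eq (hT.2.1 v h)
  · intro h
    by_contra hv
    have := S.two_le_T hT hv
    omega

end ChainSystem
end Aux
section PartI
variable {V : Type*} [Fintype V] [DecidableEq V] (S : ChainSystem V) {T : V → ℕ}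
variable (hT : S.IsTimeFunction T)
include hT

lemma ChainSystem.E_subset_perf {E : Finset (V×V)} (hE : S.IsConstructed T E) :
    E ⊆ S.perfEdges T := by
  intro p hp
  by_cases hc : p ∈ S.chainEdges
  · exact Finset.mem_union_left _ hc
  · exact Finset.mem_union_right _ (by
      simp only [Finset.mem_filter, Finset.mem_univ, true_and]
      exact hE.2 p hp hc)

omit hT in
lemma ChainSystem.mem_chainEdges {p : V × V} : p ∈ S.chainEdges ↔ S.next p.1 = some p.2 := by
  simp [ChainSystem.chainEdges]

lemma ChainSystem.step_reach {E'' : Finset (V×V)} (hchain : S.chainEdges ⊆ E'')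
    (hperf : E'' ⊆ S.perfEdges T) {t : ℕ} (ht : 1 ≤ t) :
    ZFReach E'' (Finset.univ.filter fun v => T v ≤ t)
      (Finset.univ.filter fun v => T v ≤ t + 1) := by
  by_cases hex : ∃ v : V, T v = t + 1
  · obtain ⟨v, hv⟩ := hex
    have hvsrc : ¬ S.IsSource v := by
      intro h; have := hT.2.1 v h; omega
    obtain ⟨u, hu⟩ := S.not_isSource_iff.mp hvsrc
    have hTu : T u < T v := hT.2.2.2 u v hu
    have hforce : Forces E'' (Finset.univ.filter fun v => T v ≤ t) u v := by
      refine ⟨?_, ?_, ?_, ?_, ?_⟩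
      · simp only [Finset.mem_filter, Finset.mem_univ, true_and]; omega
      · simp only [Finset.mem_filter, Finset.mem_univ, true_and]; omega
      · intro h; rw [h] at hTu; omega
      · exact hchain (S.mem_chainEdges.mpr hu)
      · intro w hw hwu hwB
        rcases Finset.mem_union.mp (hperf hw) with hc | hf
        · have h2 : S.next u = some w := S.mem_chainEdges.mp hc
          rw [hu] at h2
          exact (Option.some.inj h2).symm
        · simp only [Finset.mem_filter, Finset.mem_univ, true_and] at hf
          unfold ChainSystem.Tmax at hf
          rw [hu] at hf
          simp only [Option.elim] at hf
          exfalso; apply hwB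
          simp only [Finset.mem_filter, Finset.mem_univ, true_and]; omega
    have hins : insert v (Finset.univ.filter fun w => T w ≤ t)
        = (Finset.univ.filter fun w => T w ≤ t + 1) := by
      ext w
      simp only [Finset.mem_insert, Finset.mem_filter, Finset.mem_univ, true_and]
      constructor
      · rintro (rfl | h) <;> omega
      · intro h
        by_cases hwt : T w ≤ t
        · right; exact hwt
        · left
          have hwv : T w = t + 1 := by omega
          by_contra hne
          have hwsrc : ¬ S.IsSource w := by
            intro hs; have := hT.2.1 w hs; omega
          exact hT.2.2.1 w v hwsrc hvsrc hne (by omega)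
    exact ZFReach.step hforce (hins ▸ ZFReach.refl _)
  · push_neg at hex
    have : (Finset.univ.filter fun v => T v ≤ t)
        = (Finset.univ.filter fun v => T v ≤ t + 1) := by
      ext w
      simp only [Finset.mem_filter, Finset.mem_univ, true_and]
      have := hex w; omega
    rw [this]; exact ZFReach.refl _

lemma ChainSystem.reach_univ {E'' : Finset (V×V)} (hchain : S.chainEdges ⊆ E'')
    (hperf : E'' ⊆ S.perfEdges T) :
    ∀ (d t : ℕ), 1 ≤ t → S.γ ≤ t + d →
      ZFReach E'' (Finset.univ.filter fun v => T v ≤ t) Finset.univ := by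
  intro d
  induction d with
  | zero =>
    intro t _ hγ
    have : (Finset.univ.filter fun v => T v ≤ t) = Finset.univ := by
      apply Finset.filter_true_of_mem
      intro v _
      have := (hT.1 v).2; omega
    rw [this]; exact ZFReach.refl _
  | succ d ih =>
    intro t ht hγ
    by_cases h : S.γ ≤ t
    · have : (Finset.univ.filter fun v => T v ≤ t) = Finset.univ := by
        apply Finset.filter_true_of_mem
        intro v _
        have := (hT.1 v).2; omega
      rw [this]; exact ZFReach.refl _
    · exact zfreach_trans (S.step_reach hT hchain hperf ht)
        (ih (t+1) (by omega) (by omega))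

lemma ChainSystem.isZFS_of_between {E'' : Finset (V×V)} (hchain : S.chainEdges ⊆ E'')
    (hperf : E'' ⊆ S.perfEdges T) : IsZFS E'' S.sources := by
  unfold IsZFS
  rw [S.sources_eq_filter_T hT]
  exact S.reach_univ hT hchain hperf S.γ 1 le_rfl (by omega)

end PartI
lemma arithRHS (M Q : ℕ) :
    (M + Q) * ((M + Q) + 1) + M * (2 * (M + Q) - M - 1)
      = 2 * M * M + 4 * (M * Q) + (Q * Q + Q) := by
  rcases M with _ | M'
  · simp; ring
  · rw [show 2 * (M' + 1 + Q) - (M' + 1) - 1 = M' + 2 * Q from by omega]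
    ring

lemma arithGauss (Q s : ℕ) (h : s * 2 = Q * (Q - 1)) : s * 2 + Q = Q * Q := by
  rcases Q with _ | k
  · simp at h; omega
  · rw [show k + 1 - 1 = k from rfl] at h
    have e : (k + 1) * (k + 1) = (k + 1) * k + (k + 1) := by ring
    linarith

section Count
variable {V : Type*} [Fintype V] [DecidableEq V] (S : ChainSystem V) {T : V → ℕ}

/-- non-sources -/
def ChainSystem.nsrc : Finset V := Finset.univ.filter fun v => ∃ u, S.next u = some v

lemma ChainSystem.nsrc_eq : S.nsrc = Finset.univ \ S.sources := by
  ext v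
  simp [ChainSystem.nsrc, ChainSystem.sources]

lemma ChainSystem.m_le : S.m ≤ Fintype.card V := by
  unfold ChainSystem.m ChainSystem.sources
  exact (Finset.card_filter_le _ _).trans (le_of_eq (Finset.card_univ))

lemma ChainSystem.nsrc_card : S.nsrc.card = Fintype.card V - S.m := by
  rw [S.nsrc_eq, Finset.card_sdiff_of_subset (Finset.subset_univ _), Finset.card_univ]
  rfl

lemma ChainSystem.chainEdges_card_eq_nsrc : S.chainEdges.card = S.nsrc.card := by
  apply Finset.card_bij (fun p _ => p.2)
  · intro p hp
    rw [S.mem_chainEdges] at hp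
    simp only [ChainSystem.nsrc, Finset.mem_filter, Finset.mem_univ, true_and]
    exact ⟨p.1, hp⟩
  · intro p hp p' hp' h
    rw [S.mem_chainEdges] at hp hp'
    have h1 : p.1 = p'.1 := S.inj p.1 p'.1 p.2 hp (h ▸ hp')
    exact Prod.ext h1 h
  · intro v hv
    simp only [ChainSystem.nsrc, Finset.mem_filter, Finset.mem_univ, true_and] at hv
    obtain ⟨u, hu⟩ := hv
    exact ⟨(u,v), S.mem_chainEdges.mpr hu, rfl⟩

lemma ChainSystem.chainEdges_card_eq_nonsink :
    S.chainEdges.card = (Finset.univ.filter fun v => ¬ S.next v = none).card := by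
  apply Finset.card_bij (fun p _ => p.1)
  · intro p hp
    rw [S.mem_chainEdges] at hp
    simp only [Finset.mem_filter, Finset.mem_univ, true_and]
    rw [hp]; simp
  · intro p hp p' hp' h
    rw [S.mem_chainEdges] at hp hp'
    rw [h] at hp
    rw [hp] at hp'
    exact Prod.ext h (Option.some.inj hp')
  · intro v hv
    simp only [Finset.mem_filter, Finset.mem_univ, true_and] at hv
    obtain ⟨w, hw⟩ := Option.ne_none_iff_exists'.mp hv
    exact ⟨(v,w), S.mem_chainEdges.mpr hw, rfl⟩

lemma ChainSystem.sinks_card : (Finset.univ.filter fun v => S.next v = none).card = S.m := by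
  have h1 := Finset.card_filter_add_card_filter_not
    (s := (Finset.univ : Finset V)) (p := fun v => S.next v = none)
  have h2 := S.chainEdges_card_eq_nonsink
  have h3 := S.chainEdges_card_eq_nsrc
  have h4 := S.nsrc_card
  have h5 := S.m_le
  rw [Finset.card_univ] at h1
  omega

variable (hT : S.IsTimeFunction T)
include hT

lemma ChainSystem.T_injOn_nsrc : Set.InjOn T S.nsrc := by
  intro u hu v hv h
  by_contra hne
  simp only [Finset.coe_filter, ChainSystem.nsrc, Set.mem_setOf_eq] at hu hv
  exact hT.2.2.1 u v (S.not_isSource_iff.mpr hu.2) (S.not_isSource_iff.mpr hv.2) hne h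

lemma ChainSystem.image_T_nsrc : Finset.image T S.nsrc = Finset.Icc 2 S.γ := by
  apply Finset.eq_of_subset_of_card_le
  · intro j hj
    obtain ⟨v, hv, rfl⟩ := Finset.mem_image.mp hj
    simp only [ChainSystem.nsrc, Finset.mem_filter, Finset.mem_univ, true_and] at hv
    rw [Finset.mem_Icc]
    exact ⟨S.two_le_T hT (S.not_isSource_iff.mpr hv), (hT.1 v).2⟩
  · rw [Finset.card_image_of_injOn (S.T_injOn_nsrc hT), Nat.card_Icc, S.nsrc_card]
    unfold ChainSystem.γ
    omega

lemma ChainSystem.countT {k : ℕ} (h1 : 1 ≤ k) (h2 : k ≤ S.γ) :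
    (Finset.univ.filter fun v => T v ≤ k).card = S.m + (k - 1) := by
  have hsplit : (Finset.univ.filter fun v => T v ≤ k)
      = S.sources ∪ (S.nsrc.filter fun v => T v ≤ k) := by
    ext v
    simp only [Finset.mem_filter, Finset.mem_univ, true_and, Finset.mem_union,
      ChainSystem.mem_sources, ChainSystem.nsrc]
    constructor
    · intro h
      by_cases hs : S.IsSource v
      · exact Or.inl hs
      · exact Or.inr ⟨by simpa using (S.not_isSource_iff.mp hs), h⟩
    · rintro (hs | ⟨_, h⟩)
      · rw [hT.2.1 v hs]; omega
      · exact h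
  have hdisj : Disjoint S.sources (S.nsrc.filter fun v => T v ≤ k) := by
    rw [Finset.disjoint_left]
    intro v hv hv2
    rw [ChainSystem.mem_sources] at hv
    simp only [ChainSystem.nsrc, Finset.mem_filter, Finset.mem_univ, true_and] at hv2
    exact (S.not_isSource_iff.mpr hv2.1) hv
  rw [hsplit, Finset.card_union_of_disjoint hdisj]
  have : (S.nsrc.filter fun v => T v ≤ k).card
      = ((Finset.image T S.nsrc).filter fun j => j ≤ k).card := by
    rw [Finset.filter_image]
    exact (Finset.card_image_of_injOn
      ((S.T_injOn_nsrc hT).mono (by intro x hx; exact Finset.mem_of_mem_filter x hx))).symm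
  rw [this, S.image_T_nsrc hT]
  have : (Finset.Icc 2 S.γ).filter (fun j => j ≤ k) = Finset.Icc 2 k := by
    ext j
    simp only [Finset.mem_filter, Finset.mem_Icc]
    omega
  rw [this, Nat.card_Icc]
  rfl

lemma ChainSystem.perf_card :
    2 * (S.perfEdges T).card =
      Fintype.card V * (Fintype.card V + 1) + S.m * (2 * Fintype.card V - S.m - 1) := by
  set n := Fintype.card V with hn
  set q := n - S.m with hq
  have hm : S.m ≤ n := S.m_le
  have hγ : S.γ = q + 1 := rfl
  -- disjointness of chain edges and the filter part
  have hdisj : Disjoint S.chainEdges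
      (Finset.univ.filter fun p : V × V => T p.2 ≤ S.Tmax T p.1) := by
    rw [Finset.disjoint_left]
    intro p hp hp2
    rw [S.mem_chainEdges] at hp
    simp only [Finset.mem_filter, Finset.mem_univ, true_and] at hp2
    unfold ChainSystem.Tmax at hp2
    rw [hp] at hp2
    simp only [Option.elim] at hp2
    have h1 := (hT.1 p.2).1
    omega
  have hcard : (S.perfEdges T).card = S.chainEdges.card
      + (Finset.univ.filter fun p : V × V => T p.2 ≤ S.Tmax T p.1).card := by
    unfold ChainSystem.perfEdges
    exact Finset.card_union_of_disjoint hdisj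
  -- the filter part as a sum over first coordinates
  have hP : (Finset.univ.filter fun p : V × V => T p.2 ≤ S.Tmax T p.1).card
      = ∑ x : V, (Finset.univ.filter fun w => T w ≤ S.Tmax T x).card := by
    rw [card_eq_sum_out]
    refine Finset.sum_congr rfl fun x _ => ?_
    congr 1
    ext w
    simp
  -- split the sum into sinks and non-sinks
  have hsum : ∑ x : V, (Finset.univ.filter fun w => T w ≤ S.Tmax T x).card
      = (∑ x ∈ Finset.univ.filter (fun v => S.next v = none),
          (Finset.univ.filter fun w => T w ≤ S.Tmax T x).card)
      + (∑ x ∈ Finset.univ.filter (fun v => ¬ S.next v = none),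
          (Finset.univ.filter fun w => T w ≤ S.Tmax T x).card) :=
    (Finset.sum_filter_add_sum_filter_not _ _ _).symm
  -- sinks contribute n each
  have hsink : ∑ x ∈ Finset.univ.filter (fun v => S.next v = none),
      (Finset.univ.filter fun w => T w ≤ S.Tmax T x).card = S.m * n := by
    rw [Finset.sum_congr rfl (g := fun _ => n) ?_, Finset.sum_const, S.sinks_card, smul_eq_mul]
    intro x hx
    simp only [Finset.mem_filter, Finset.mem_univ, true_and] at hx
    have : S.Tmax T x = S.γ := by unfold ChainSystem.Tmax; rw [hx]; rfl
    rw [this]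

    rw [Finset.filter_true_of_mem (fun v _ => (hT.1 v).2), Finset.card_univ]
  -- non-sinks: transfer to chain edges, then to non-sources, then to Icc
  have step1 : ∑ p ∈ S.chainEdges, (Finset.univ.filter fun w => T w ≤ S.Tmax T p.1).card
      = ∑ x ∈ Finset.univ.filter (fun v => ¬ S.next v = none),
          (Finset.univ.filter fun w => T w ≤ S.Tmax T x).card := by
    apply Finset.sum_bij (fun p _ => p.1)
    · intro p hp
      rw [S.mem_chainEdges] at hp
      simp only [Finset.mem_filter, Finset.mem_univ, true_and]
      rw [hp]; simp
    · intro p hp p' hp' h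
      rw [S.mem_chainEdges] at hp hp'
      rw [h] at hp; rw [hp] at hp'
      exact Prod.ext h (Option.some.inj hp')
    · intro v hv
      simp only [Finset.mem_filter, Finset.mem_univ, true_and] at hv
      obtain ⟨w, hw⟩ := Option.ne_none_iff_exists'.mp hv
      exact ⟨(v,w), S.mem_chainEdges.mpr hw, rfl⟩
    · intro p _
      rfl
  have step2 : ∑ p ∈ S.chainEdges, (Finset.univ.filter fun w => T w ≤ S.Tmax T p.1).card
      = ∑ p ∈ S.chainEdges, (S.m + (T p.2 - 2)) := by
    refine Finset.sum_congr rfl fun p hp => ?_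
    rw [S.mem_chainEdges] at hp
    have htm : S.Tmax T p.1 = T p.2 - 1 := by
      unfold ChainSystem.Tmax; rw [hp]; rfl
    have hns : ¬ S.IsSource p.2 := S.not_isSource_iff.mpr ⟨p.1, hp⟩
    have h2 := S.two_le_T hT hns
    have h3 := (hT.1 p.2).2
    rw [htm, S.countT hT (by omega) (by omega)]
    omega
  have step3 : ∑ p ∈ S.chainEdges, (S.m + (T p.2 - 2))
      = ∑ w ∈ S.nsrc, (S.m + (T w - 2)) := by
    apply Finset.sum_bij (fun p _ => p.2)
    · intro p hp
      rw [S.mem_chainEdges] at hp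
      simp only [ChainSystem.nsrc, Finset.mem_filter, Finset.mem_univ, true_and]
      exact ⟨p.1, hp⟩
    · intro p hp p' hp' h
      rw [S.mem_chainEdges] at hp hp'
      have h1 : p.1 = p'.1 := S.inj p.1 p'.1 p.2 hp (h ▸ hp')
      exact Prod.ext h1 h
    · intro v hv
      simp only [ChainSystem.nsrc, Finset.mem_filter, Finset.mem_univ, true_and] at hv
      obtain ⟨u, hu⟩ := hv
      exact ⟨(u,v), S.mem_chainEdges.mpr hu, rfl⟩
    · intro p _
      rfl
  have step4 : ∑ w ∈ S.nsrc, (S.m + (T w - 2))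
      = ∑ j ∈ Finset.Icc 2 S.γ, (S.m + (j - 2)) := by
    have hinj : ∀ x ∈ S.nsrc, ∀ y ∈ S.nsrc, T x = T y → x = y := fun x hx y hy h =>
      S.T_injOn_nsrc hT (Finset.mem_coe.mpr hx) (Finset.mem_coe.mpr hy) h
    rw [← S.image_T_nsrc hT, Finset.sum_image hinj]
  have step5 : ∑ j ∈ Finset.Icc 2 S.γ, (S.m + (j - 2))
      = ∑ i ∈ Finset.range q, (S.m + i) := by
    rw [hγ]
    have : Finset.Icc 2 (q + 1) = (Finset.range q).image (fun i => i + 2) := by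
      ext j
      simp only [Finset.mem_Icc, Finset.mem_image, Finset.mem_range]
      constructor
      · intro h; exact ⟨j - 2, by omega, by omega⟩
      · rintro ⟨i, hi, rfl⟩; omega
    rw [this, Finset.sum_image (fun x _ y _ h => by omega)]
    exact Finset.sum_congr rfl fun i _ => by omega
  have step6 : ∑ i ∈ Finset.range q, (S.m + i) = q * S.m + ∑ i ∈ Finset.range q, i := by
    rw [Finset.sum_add_distrib, Finset.sum_const, Finset.card_range, smul_eq_mul]
  -- assemble
  have hchain : S.chainEdges.card = q := by
    rw [S.chainEdges_card_eq_nsrc, S.nsrc_card]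
  have hgauss : (∑ i ∈ Finset.range q, i) * 2 = q * (q - 1) := Finset.sum_range_id_mul_two q
  have hnq : n = S.m + q := by omega
  have hRHS : n * (n + 1) + S.m * (2 * n - S.m - 1)
      = 2 * S.m * S.m + 4 * (S.m * q) + (q * q + q) := by
    rw [hnq]; exact arithRHS S.m q
  have hgauss2 : (∑ i ∈ Finset.range q, i) * 2 + q = q * q :=
    arithGauss q _ hgauss
  rw [hcard, hP, hsum, hsink, ← step1, step2, step3, step4, step5, step6, hchain, hRHS, hnq]
  linarith [hgauss2]

end Count
section Bound
variable {V : Type*} [Fintype V] [DecidableEq V]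

/-- out-degree bound accounting for a zero forcing process -/
lemma zf_sum_bound (F : Finset (V×V)) {B C : Finset V} (h : ZFReach F B C) :
    C = Finset.univ → ∀ U : Finset V,
      (∀ x ∈ U, ∀ w, (x,w) ∈ F → w = x ∨ w ∈ B) →
      (∑ x : V, (Finset.univ.filter fun w => (x,w) ∈ F).card)
        ≤ (∑ x ∈ U, (Finset.univ.filter fun w => (x,w) ∈ F).card)
          + (∑ j ∈ Finset.range (Fintype.card V - B.card), (B.card + 1 + j))
          + (B.card - U.card) * Fintype.card V := by
  induction h with
  | refl B =>
    intro hB U hU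
    subst hB
    rw [Finset.card_univ, Nat.sub_self, Finset.range_zero, Finset.sum_empty]
    have hsplit : ∑ x : V, (Finset.univ.filter fun w => (x,w) ∈ F).card
        = (∑ x ∈ Finset.univ \ U, (Finset.univ.filter fun w => (x,w) ∈ F).card)
          + (∑ x ∈ U, (Finset.univ.filter fun w => (x,w) ∈ F).card) :=
      (Finset.sum_sdiff (Finset.subset_univ U)).symm
    have hbd : (∑ x ∈ Finset.univ \ U, (Finset.univ.filter fun w => (x,w) ∈ F).card)
        ≤ (Finset.univ \ U).card * Fintype.card V := by
      apply Finset.sum_le_card_nsmul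
      intro x _
      exact (Finset.card_filter_le _ _).trans (le_of_eq Finset.card_univ)
    rw [Finset.card_sdiff_of_subset (Finset.subset_univ U), Finset.card_univ] at hbd
    omega
  | @step B C u v hf hr ih =>
    intro hC U hU
    have hvB : v ∉ B := hf.2.1
    have huB : u ∈ B := hf.1
    have huv : u ≠ v := hf.2.2.1
    have huU : u ∉ U := by
      intro hu
      rcases hU u hu v hf.2.2.2.1 with h1 | h1
      · exact huv h1.symm
      · exact hvB h1
    have hcardB : (insert v B).card = B.card + 1 := Finset.card_insert_of_notMem hvB
    have hcardU : (insert u U).card = U.card + 1 := Finset.card_insert_of_notMem huU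
    have hlt : B.card + 1 ≤ Fintype.card V := by
      rw [← hcardB]
      exact Finset.card_le_univ _
    have hU' : ∀ x ∈ insert u U, ∀ w, (x,w) ∈ F → w = x ∨ w ∈ insert v B := by
      intro x hx w hw
      rcases Finset.mem_insert.mp hx with rfl | hx
      · by_cases h1 : w = x
        · exact Or.inl h1
        · by_cases h2 : w ∈ B
          · exact Or.inr (Finset.mem_insert_of_mem h2)
          · exact Or.inr (by rw [hf.2.2.2.2 w hw h1 h2]; exact Finset.mem_insert_self v B)
      · rcases hU x hx w hw with h1 | h1
        · exact Or.inl h1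
        · exact Or.inr (Finset.mem_insert_of_mem h1)
    have hout_u : (Finset.univ.filter fun w => (u,w) ∈ F).card ≤ B.card + 1 := by
      rw [← hcardB]
      apply Finset.card_le_card
      intro w hw
      simp only [Finset.mem_filter, Finset.mem_univ, true_and] at hw
      by_cases h1 : w = u
      · subst h1; exact Finset.mem_insert_of_mem huB
      · by_cases h2 : w ∈ B
        · exact Finset.mem_insert_of_mem h2
        · rw [hf.2.2.2.2 w hw h1 h2]; exact Finset.mem_insert_self v B
    have := ih hC (insert u U) hU'
    rw [hcardB, hcardU, Finset.sum_insert huU] at this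
    have hsum : ∑ j ∈ Finset.range (Fintype.card V - B.card), (B.card + 1 + j)
        = (B.card + 1 + 0) + ∑ j ∈ Finset.range (Fintype.card V - (B.card + 1)),
            (B.card + 1 + 1 + j) := by
      rw [show Fintype.card V - B.card = (Fintype.card V - (B.card + 1)) + 1 from by omega,
        Finset.sum_range_succ']
      rw [Nat.add_comm]
      congr 1
      exact Finset.sum_congr rfl fun j _ => by omega
    rw [Nat.succ_sub_succ] at this
    omega
end Bound

section Final
variable {V : Type*} [Fintype V] [DecidableEq V]

lemma zfs_card_bound (S : ChainSystem V) (F : Finset (V×V)) (h : IsZFS F S.sources) :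
    2 * F.card ≤ Fintype.card V * (Fintype.card V + 1)
      + S.m * (2 * Fintype.card V - S.m - 1) := by
  have hm : S.m ≤ Fintype.card V := S.m_le
  set n := Fintype.card V with hn
  set q := n - S.m with hq
  have hb := zf_sum_bound F h rfl ∅ (by simp)
  rw [Finset.sum_empty, Finset.card_empty] at hb
  have hsc : S.sources.card = S.m := rfl
  rw [hsc, Nat.sub_zero] at hb
  rw [card_eq_sum_out F]
  have hsum : ∑ j ∈ Finset.range (n - S.m), (S.m + 1 + j)
      = q * (S.m + 1) + ∑ j ∈ Finset.range q, j := by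
    rw [← hq, Finset.sum_add_distrib, Finset.sum_const, Finset.card_range, smul_eq_mul]
  rw [hsum] at hb
  have hnq : n = S.m + q := by omega
  have hRHS : n * (n + 1) + S.m * (2 * n - S.m - 1)
      = 2 * S.m * S.m + 4 * (S.m * q) + (q * q + q) := by
    rw [hnq]; exact arithRHS S.m q
  have hgauss2 : (∑ i ∈ Finset.range q, i) * 2 + q = q * q :=
    arithGauss q _ (Finset.sum_range_id_mul_two q)
  rw [hRHS]
  rw [← hn] at hb
  rw [hnq] at hb
  nlinarith [hb, hgauss2]

end Final


/-- for a `(𝒞,T)`-constructed graph `G` with control nodes the sources of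
`𝒞`: (i) adding any subset of `E_perf \ E(G)` preserves the zero forcing property;
(ii) every additive edge-set has cardinality at most `|E_perf \ E(G)|`, which equals
`n(n+1)/2 + m(2n − m − 1)/2 − |E(G)|` (stated doubled, to avoid division); hence
`E_perf \ E(G)` is a critical additive edge-set and the critical additive number equals
that value. -/
theorem stmt10 {V : Type*} [Fintype V] [DecidableEq V] (S : ChainSystem V) (T : V → ℕ)
    (hT : S.IsTimeFunction T) (E : Finset (V × V)) (hE : S.IsConstructed T E) :
    (∀ E' ⊆ S.perfEdges T \ E, IsZFS (E ∪ E') S.sources) ∧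
    (∀ Estar : Finset (V × V), Disjoint Estar E →
      (∀ E' ⊆ Estar, IsZFS (E ∪ E') S.sources) →
      Estar.card ≤ (S.perfEdges T \ E).card) ∧
    2 * ((S.perfEdges T \ E).card + E.card) =
      Fintype.card V * (Fintype.card V + 1) +
        S.m * (2 * Fintype.card V - S.m - 1) := by
  have hperfE : E ⊆ S.perfEdges T := S.E_subset_perf hT hE
  have hcount := S.perf_card hT
  have hsd : (S.perfEdges T \ E).card + E.card = (S.perfEdges T).card :=
    Finset.card_sdiff_add_card_eq_card hperfE
  refine ⟨?_, ?_, ?_⟩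
  · intro E' hE'
    apply S.isZFS_of_between hT
    · exact hE.1.trans Finset.subset_union_left
    · intro p hp
      rcases Finset.mem_union.mp hp with h | h
      · exact hperfE h
      · exact (Finset.mem_sdiff.mp (hE' h)).1
  · intro Estar hdisj hall
    have hzfs : IsZFS (E ∪ Estar) S.sources := hall Estar le_rfl
    have hb := zfs_card_bound S (E ∪ Estar) hzfs
    have hcu : (E ∪ Estar).card = E.card + Estar.card :=
      Finset.card_union_of_disjoint hdisj.symm
    rw [hcu] at hb
    linarith [hb, hcount, hsd]
  · rw [hsd]; exact hcount
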